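/- Let ε > 0, τ in the upper half-plane with imaginary part τ_I, and define u_τ(z) = e^{-|z|²/(2ε)} e^{z²/(2ε)} Θ(√(τ_I/(πε)) z, τ) where Θ is the Jacobi theta function. Then |u_τ| is doubly periodic: |u_τ(z + t)| = |u_τ(z)| for every t in the lattice √(πε/τ_I) ℤ ⊕ √(πε/τ_I) τ ℤ. -/

import Mathlib

/-!
`Θ(v, τ)` is a Gaussian multiple of `jacobiTheta₂ (v + 1/2 + τ/2) τ`, so it inherits the
quasi-periodicity of `jacobiTheta₂`; on taking norms,
`|Θ(v + k + lτ)| = exp(2πl Im v + πl² Im τ) |Θ(v)|`. The Gaussian prefactor of `u_τ` has modulus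
`exp(-(Im z)²/ε)`, and for `z ↦ z + √(πε/τ_I)(k + lτ)` its change exactly cancels that factor.
-/

open Complex

/-- The Jacobi theta function `Θ(v,τ) = (1/i) Σ_{n∈ℤ} (-1)^n e^{iπτ(n+1/2)²} e^{(2n+1)πiv}`. -/
noncomputable def Theta (v τ : ℂ) : ℂ :=
  (1 / Complex.I) * ∑' n : ℤ,
    (-1 : ℂ) ^ n * Complex.exp (Complex.I * Real.pi * τ * ((n : ℂ) + 1 / 2) ^ 2) *
      Complex.exp ((2 * (n : ℂ) + 1) * Real.pi * Complex.I * v)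

open Real

lemma jacobiTheta₂_add_int_add_int_mul (k l : ℤ) (w τ : ℂ) :
    jacobiTheta₂ (w + k + l * τ) τ
      = cexp (-(π * I * l ^ 2 * τ) - 2 * π * I * l * w) * jacobiTheta₂ w τ := by
  conv_rhs => erw [← tsum_mul_left, ← (Equiv.addRight l).tsum_eq]
  refine tsum_congr fun n => ?_
  simp only [jacobiTheta₂_term, Equiv.coe_addRight, Int.cast_add, ← Complex.exp_add]
  rw [show (2 * π * I * n * (w + k + l * τ) + π * I * n ^ 2 * τ : ℂ)
      = ((n * k : ℤ) : ℂ) * (2 * π * I)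
        + (-(π * I * l ^ 2 * τ) - 2 * π * I * l * w
            + (2 * π * I * (n + l) * w + π * I * (n + l) ^ 2 * τ)) by push_cast; ring,
    Complex.exp_add, Complex.exp_int_mul_two_pi_mul_I, one_mul]

lemma Theta_eq_jacobiTheta₂ (v τ : ℂ) :
    Theta v τ = 1 / I * cexp (π * I * τ / 4 + π * I * v) * jacobiTheta₂ (v + 1/2 + τ/2) τ := by
  unfold Theta jacobiTheta₂
  conv_rhs => rw [mul_assoc, ← tsum_mul_left]
  congr 1
  refine tsum_congr fun n => ?_
  rw [show (-1 : ℂ) ^ n = cexp ((n : ℂ) * (π * I)) by rw [Complex.exp_int_mul, Complex.exp_pi_mul_I],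
    jacobiTheta₂_term, ← Complex.exp_add, ← Complex.exp_add, ← Complex.exp_add]
  congr 1
  ring

lemma Theta_add_int_add_int_mul (k l : ℤ) (v τ : ℂ) :
    Theta (v + k + l * τ) τ
      = (-1) ^ (k + l) * cexp (-2 * π * I * l * v) * cexp (-(π * I * l ^ 2 * τ)) * Theta v τ := by
  rw [Theta_eq_jacobiTheta₂, Theta_eq_jacobiTheta₂,
    show v + k + l * τ + 1/2 + τ/2 = (v + 1/2 + τ/2) + k + l * τ by ring,
    jacobiTheta₂_add_int_add_int_mul, ← Complex.exp_pi_mul_I, ← Complex.exp_int_mul]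
  have hexp : cexp (π * I * τ / 4 + π * I * (v + k + l * τ))
        * cexp (-(π * I * l ^ 2 * τ) - 2 * π * I * l * (v + 1/2 + τ/2))
      = cexp (((k + l : ℤ) : ℂ) * (π * I)) * cexp (-2 * π * I * l * v)
        * cexp (-(π * I * l ^ 2 * τ)) * cexp (π * I * τ / 4 + π * I * v)
        * cexp (((-l : ℤ) : ℂ) * (2 * π * I)) := by
    simp only [← Complex.exp_add]
    congr 1
    push_cast
    ring
  rw [Complex.exp_int_mul_two_pi_mul_I, mul_one] at hexp
  linear_combination (1 / I * jacobiTheta₂ (v + 1/2 + τ/2) τ) * hexp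

lemma norm_Theta_add_int_add_int_mul (k l : ℤ) (v τ : ℂ) :
    ‖Theta (v + k + l * τ) τ‖ = rexp (2 * π * l * v.im + π * l ^ 2 * τ.im) * ‖Theta v τ‖ := by
  rw [Theta_add_int_add_int_mul, norm_mul, norm_mul, norm_mul, norm_zpow, norm_neg, norm_one,
    one_zpow, one_mul, Complex.norm_exp, Complex.norm_exp, ← Real.exp_add]
  congr 2
  simp [pow_two]

lemma norm_exp_neg_normSq_mul_exp_sq (ε : ℝ) (z : ℂ) :
    ‖cexp (-(‖z‖ ^ 2 : ℂ) / (2 * ε)) * cexp (z ^ 2 / (2 * ε))‖ = rexp (-z.im ^ 2 / ε) := by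
  rw [← Complex.exp_add, Complex.norm_exp, ← add_div,
    show (2 * ε : ℂ) = ((2 * ε : ℝ) : ℂ) by push_cast; rfl, Complex.div_ofReal_re]
  congr 1
  rw [← Complex.ofReal_pow, Complex.sq_norm, Complex.normSq_apply]
  simp [pow_two]
  ring

/-- `|u_τ|` is periodic over the lattice `√(πε/τ_I) ℤ ⊕ √(πε/τ_I) τ ℤ`, where
`u_τ(z) = e^{-|z|²/2ε} e^{z²/2ε} Θ(√(τ_I/(πε)) z, τ)`. -/
theorem stmt_12 (ε : ℝ) (hε : 0 < ε) (τ : ℂ) (hτ : 0 < τ.im)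
    (u : ℂ → ℂ)
    (hu : ∀ z : ℂ, u z = Complex.exp (-(‖z‖ ^ 2 : ℂ) / (2 * ε)) *
        Complex.exp (z ^ 2 / (2 * ε)) *
        Theta ((Real.sqrt (τ.im / (Real.pi * ε)) : ℂ) * z) τ)
    (k l : ℤ) (z : ℂ) :
    ‖u (z + (Real.sqrt (Real.pi * ε / τ.im) : ℂ) * ((k : ℂ) + (l : ℂ) * τ))‖ = ‖u z‖ := by
  set c := √(π * ε / τ.im)
  have hc : 0 < c := Real.sqrt_pos.2 (by positivity)
  have hc2 : π * ε = c ^ 2 * τ.im := by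
    rw [Real.sq_sqrt (by positivity), div_mul_cancel₀ _ hτ.ne']
  have hs : √(τ.im / (π * ε)) = c⁻¹ := by rw [← inv_div, Real.sqrt_inv]
  have hnorm (w : ℂ) : ‖u w‖ = rexp (-w.im ^ 2 / ε) * ‖Theta ((c⁻¹ : ℝ) * w) τ‖ := by
    rw [hu, norm_mul, norm_exp_neg_normSq_mul_exp_sq, hs]
  have hshift : ((c⁻¹ : ℝ) : ℂ) * (z + c * (k + l * τ)) = (c⁻¹ : ℝ) * z + k + l * τ := by
    push_cast
    field_simp [Complex.ofReal_ne_zero.2 hc.ne']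
    ring
  rw [hnorm, hnorm, hshift, norm_Theta_add_int_add_int_mul, ← mul_assoc, ← Real.exp_add]
  congr 2
  simp only [Complex.add_im, Complex.mul_im, Complex.ofReal_re, Complex.ofReal_im,
    Complex.intCast_re, Complex.intCast_im, zero_mul, add_zero, zero_add]
  field_simp
  linear_combination (l : ℝ) * (2 * z.im + c * l * τ.im) * hc2
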